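/- arXiv:1607.00963 — 2 statements merged into one kernel-verified Lean document; each statement's English description precedes it below -/
import Mathlib

section
/- Let $(v_n)\in\mathcal{GS}(v^*)$, let $(\beta_n)\in\mathcal{GS}(-\beta)$ with $\beta\in(1/2,1]$ and $\beta_n\in(0,1)$ for all $n$, set $\xi=\lim_{n\to\infty}(n\beta_n)^{-1}$ (assumed to exist in $[0,\infty)$), and let $m>0$ satisfy $m-v^*\xi>0$. Then with $Q_n=\prod_{j=1}^n(1-\beta_j)$, one has $\lim_{n\to\infty} v_n Q_n^m \sum_{k=1}^n Q_k^{-m}\frac{\beta_k}{v_k}=\frac{1}{m-v^*\xi}$. -/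
open Filter Finset Real

def GS (γ : ℝ) (v : ℕ → ℝ) : Prop :=
  (∀ n, 0 < v n) ∧
    Tendsto (fun n : ℕ => (n : ℝ) * (1 - v (n - 1) / v n)) atTop (nhds γ)

/-!
Put `T n = Q n ^ (-m) / v n` and `S n = ∑ k ∈ Icc 1 n, Q k ^ (-m) * (β k / v k)`, so that the
sequence in question is `S n / T n`. Both have multiplicative increments:
`S (n + 1) - S n = T (n + 1) * β (n + 1)` and `T (n + 1) - T n = T (n + 1) * c n` with
`c n = 1 - v (n + 1) / v n * (1 - β (n + 1)) ^ m`. Since `β ∈ GS(-b)` with `b > 0`, `β n → 0`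
(its reciprocal grows like a product `∏ (1 + κ / n)`), and to first order in `β (n + 1)`,
`c n / β (n + 1) → m - v* ξ`, hence Stolz–Cesàro gives `S n / T n → 1 / (m - v* ξ)`.
It applies because `c n ≳ β (n + 1) ≳ 1 / n`, so `T` too grows at least like such a product,
which diverges with the harmonic series.
-/

open Asymptotics Topology

theorem tendsto_div_of_tendsto_sub_div_sub {S T : ℕ → ℝ} {L : ℝ}
    (hmono : ∀ᶠ n in atTop, T n < T (n + 1)) (htop : Tendsto T atTop atTop)
    (h : Tendsto (fun n => (S (n + 1) - S n) / (T (n + 1) - T n)) atTop (𝓝 L)) :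
    Tendsto (fun n => S n / T n) atTop (𝓝 L) := by
  obtain ⟨N, hN⟩ := eventually_atTop.1 hmono
  set g : ℕ → ℝ := fun i => T (i + 1 + N) - T (i + N)
  have hgpos : ∀ i, 0 < g i := fun i => sub_pos.2 (by
    simpa only [Nat.add_right_comm] using hN (i + N) (Nat.le_add_left N i))
  have hfg : (fun i => S (i + 1 + N) - S (i + N) - L * g i) =o[atTop] g := by
    rw [isLittleO_iff_tendsto' (.of_forall fun i hi => absurd hi (hgpos i).ne')]
    refine (sub_self L ▸ (h.comp (tendsto_add_atTop_nat N)).sub_const L).congr fun i => ?_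
    simp only [Function.comp_apply, Nat.add_right_comm i N 1]
    have hgi := (hgpos i).ne'
    simp only [g] at hgi ⊢
    field_simp
  have hT : Tendsto (fun n => T (n + N)) atTop atTop := htop.comp (tendsto_add_atTop_nat N)
  have hsum := hfg.sum_range (fun i => (hgpos i).le) (by
    simpa only [g, sum_range_sub (fun i => T (i + N))] using
      tendsto_atTop_add_const_right _ (-T (0 + N)) hT |>.congr fun n => (sub_eq_add_neg _ _).symm)
  simp only [g, sum_sub_distrib, ← mul_sum, sum_range_sub (fun i => S (i + N)),
    sum_range_sub (fun i => T (i + N))] at hsum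
  have hconst : ∀ c : ℝ, (fun _ : ℕ => c) =o[atTop] fun n => T (n + N) := fun c =>
    isLittleO_const_left.2 (.inr (tendsto_norm_atTop_atTop.comp hT))
  have hlo : (fun n => S (n + N) - L * T (n + N)) =o[atTop] fun n => T (n + N) := by
    have := (hsum.trans_isBigO ((isBigO_refl _ _).sub (hconst _).isBigO)).add
      (hconst (S (0 + N) - L * T (0 + N)))
    exact this.congr_left fun n => by ring
  rw [← tendsto_add_atTop_iff_nat N]
  refine (zero_add L ▸ hlo.tendsto_div_nhds_zero.add_const L).congr' ?_
  filter_upwards [hT.eventually_gt_atTop 0] with n hn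
  field_simp
  ring

theorem tendsto_sum_range_one_div_add_atTop (N : ℕ) :
    Tendsto (fun k => ∑ i ∈ range k, 1 / (((i + N : ℕ) : ℝ) + 1)) atTop atTop := by
  rw [← not_summable_iff_tendsto_nat_atTop_of_nonneg fun i => by positivity]
  intro hs
  refine Real.not_summable_one_div_natCast ((summable_nat_add_iff (N + 1)).1 (hs.congr fun i => ?_))
  push_cast
  ring

theorem tendsto_atTop_of_mul_one_add_div_le {a : ℕ → ℝ} {c : ℝ} (hc : 0 < c)
    (ha : ∀ n, 0 < a n) (h : ∀ᶠ n : ℕ in atTop, a n * (1 + c / (n + 1)) ≤ a (n + 1)) :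
    Tendsto a atTop atTop := by
  obtain ⟨N, hN⟩ := eventually_atTop.1 h
  have hincr : ∀ i,
      a (i + N) * (c / (((i + N : ℕ) : ℝ) + 1)) ≤ a (i + 1 + N) - a (i + N) := by
    intro i
    have := hN (i + N) (Nat.le_add_left N i)
    rw [Nat.add_right_comm] at this
    linarith
  have hmono : ∀ i, a N ≤ a (i + N) := by
    intro i
    induction i with
    | zero => simp
    | succ i ih =>
      have := mul_pos (ha (i + N)) (show 0 < c / (((i + N : ℕ) : ℝ) + 1) by positivity)
      linarith [hincr i]
  have hlower : ∀ k,
      a N + a N * c * ∑ i ∈ range k, 1 / (((i + N : ℕ) : ℝ) + 1) ≤ a (k + N) := by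
    intro k
    have htelescope := sum_range_sub (fun i => a (i + N)) k
    have hsum : ∑ i ∈ range k, a N * c * (1 / (((i + N : ℕ) : ℝ) + 1))
        ≤ ∑ i ∈ range k, (a (i + 1 + N) - a (i + N)) := by
      gcongr with i
      calc a N * c * (1 / (((i + N : ℕ) : ℝ) + 1))
          = a N * (c / (((i + N : ℕ) : ℝ) + 1)) := by ring
        _ ≤ a (i + N) * (c / (((i + N : ℕ) : ℝ) + 1)) := by gcongr; exact hmono i
        _ ≤ _ := hincr i
    rw [← mul_sum] at hsum
    simp only [zero_add] at htelescope
    linarith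
  rw [← tendsto_add_atTop_iff_nat N]
  refine tendsto_atTop_mono hlower (tendsto_atTop_add_const_left _ _ ?_)
  exact (tendsto_sum_range_one_div_add_atTop N).const_mul_atTop (mul_pos (ha N) hc)

theorem tendsto_one_sub_one_sub_rpow_div (m : ℝ) :
    Tendsto (fun x : ℝ => (1 - (1 - x) ^ m) / x) (𝓝[≠] 0) (𝓝 m) := by
  have hder : HasDerivAt (fun x : ℝ => (1 - x) ^ m) (-m) 0 := by
    simpa using ((hasDerivAt_id (0 : ℝ)).const_sub 1).rpow_const (p := m) (by norm_num)
  refine (neg_neg m ▸ (hasDerivAt_iff_tendsto_slope.1 hder).neg).congr fun x => ?_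
  simp only [slope_def_field, sub_zero, one_rpow]
  rw [← neg_div, neg_sub]

namespace GS

variable {γ : ℝ} {v : ℕ → ℝ}

theorem tendsto_succ (h : GS γ v) :
    Tendsto (fun n : ℕ => ((n : ℝ) + 1) * (1 - v n / v (n + 1))) atTop (𝓝 γ) :=
  (h.2.comp (tendsto_add_atTop_nat 1)).congr fun n => by simp

theorem tendsto_succ_div (h : GS γ v) : Tendsto (fun n => v (n + 1) / v n) atTop (𝓝 1) := by
  have hinv : Tendsto (fun n : ℕ => ((n : ℝ) + 1)⁻¹) atTop (𝓝 0) :=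
    tendsto_inv_atTop_zero.comp (tendsto_atTop_add_const_right _ 1 tendsto_natCast_atTop_atTop)
  have hdiv : Tendsto (fun n => v n / v (n + 1)) atTop (𝓝 1) := by
    have := (h.tendsto_succ.mul hinv).const_sub 1
    rw [mul_zero, sub_zero] at this
    refine this.congr fun n => ?_
    field_simp
    ring
  simpa using hdiv.inv₀ one_ne_zero

theorem tendsto_zero_of_neg (h : GS γ v) (hγ : γ < 0) : Tendsto v atTop (𝓝 0) := by
  have hinv : Tendsto (fun n => (v n)⁻¹) atTop atTop := by
    refine tendsto_atTop_of_mul_one_add_div_le (c := -(γ / 2)) (by linarith)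
      (fun n => inv_pos.2 (h.1 n)) ?_
    filter_upwards [h.tendsto_succ.eventually_le_const (by linarith : γ < γ / 2)] with n hn
    have hv := h.1 n
    have hv' := h.1 (n + 1)
    have hratio : 1 + -(γ / 2) / ((n : ℝ) + 1) ≤ v n / v (n + 1) := by
      have : -(γ / 2) / ((n : ℝ) + 1) ≤ v n / v (n + 1) - 1 := by
        rw [div_le_iff₀ (by positivity)]
        linarith
      linarith
    calc (v n)⁻¹ * (1 + -(γ / 2) / ((n : ℝ) + 1))
        ≤ (v n)⁻¹ * (v n / v (n + 1)) := by gcongr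
      _ = (v (n + 1))⁻¹ := by field_simp
  exact hinv.inv_tendsto_atTop.congr fun n => inv_inv (v n)

end GS

theorem tendsto_div_of_multiplicative_increments {S T b c : ℕ → ℝ} {L κ : ℝ}
    (hL : 0 < L) (hκ : 0 < κ)
    (hT : ∀ n, 0 < T n) (hb : ∀ n, 0 < b n)
    (hS : ∀ n, S (n + 1) - S n = T (n + 1) * b n)
    (hTc : ∀ n, T (n + 1) - T n = T (n + 1) * c n)
    (hcb : Tendsto (fun n => c n / b n) atTop (𝓝 L))
    (hbκ : ∀ᶠ n : ℕ in atTop, κ / (n + 1) ≤ b n) :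
    Tendsto (fun n => S n / T n) atTop (𝓝 L⁻¹) := by
  have hc : ∀ᶠ n in atTop, L / 2 * b n ≤ c n := by
    filter_upwards [hcb.eventually (eventually_gt_nhds (half_lt_self hL))] with n hn
    exact ((lt_div_iff₀ (hb n)).1 hn).le
  have hmono : ∀ᶠ n in atTop, T n < T (n + 1) := by
    filter_upwards [hc] with n hn
    have := mul_pos (hT (n + 1)) ((mul_pos (half_pos hL) (hb n)).trans_le hn)
    linarith [hTc n]
  refine tendsto_div_of_tendsto_sub_div_sub hmono ?_ ?_
  · refine tendsto_atTop_of_mul_one_add_div_le (c := L / 2 * κ) (by positivity) hT ?_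
    filter_upwards [hc, hbκ, hmono] with n hcn hbn hTn
    have hκc : L / 2 * κ / (n + 1) ≤ c n :=
      calc L / 2 * κ / (n + 1) = L / 2 * (κ / (n + 1)) := by ring
        _ ≤ L / 2 * b n := by gcongr
        _ ≤ c n := hcn
    have hc0 : 0 ≤ c n := (by positivity : (0 : ℝ) ≤ L / 2 * κ / (n + 1)).trans hκc
    calc T n * (1 + L / 2 * κ / (n + 1)) ≤ T n * (1 + c n) := by gcongr; exact (hT n).le
      _ ≤ T n + T (n + 1) * c n := by nlinarith [mul_le_mul_of_nonneg_right hTn.le hc0]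
      _ = T (n + 1) := by linarith [hTc n]
  · refine (hcb.inv₀ hL.ne').congr fun n => ?_
    rw [hS, hTc, mul_div_mul_left _ _ (hT _).ne', inv_div]

theorem eventually_div_le_of_tendsto_inv_mul {x : ℕ → ℝ} {ξ : ℝ} (hx : ∀ n, 0 < x n)
    (h : Tendsto (fun n : ℕ => ((n : ℝ) * x n)⁻¹) atTop (𝓝 ξ)) :
    ∀ᶠ n : ℕ in atTop, (|ξ| + 1)⁻¹ / (n + 1) ≤ x (n + 1) := by
  filter_upwards [(h.comp (tendsto_add_atTop_nat 1)).eventually_le_const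
    ((le_abs_self ξ).trans_lt (lt_add_one _))] with n hn
  have hpos : (0 : ℝ) < ((n : ℝ) + 1) * x (n + 1) := mul_pos (by positivity) (hx _)
  simp only [Function.comp_apply, Nat.cast_add, Nat.cast_one] at hn
  rw [div_le_iff₀ (by positivity), mul_comm]
  exact inv_le_of_inv_le₀ hpos hn

theorem GS.tendsto_one_sub_ratio_mul_rpow_div {v β : ℕ → ℝ} {vstar ξ : ℝ} (m : ℝ)
    (hv : GS vstar v) (hβ : ∀ n, 0 < β n) (hβ0 : Tendsto β atTop (𝓝 0))
    (hξ : Tendsto (fun n : ℕ => ((n : ℝ) * β n)⁻¹) atTop (𝓝 ξ)) :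
    Tendsto (fun n => (1 - v (n + 1) / v n * (1 - β (n + 1)) ^ m) / β (n + 1)) atTop
      (𝓝 (m - vstar * ξ)) := by
  have hβ1 : Tendsto (fun n => β (n + 1)) atTop (𝓝 0) := hβ0.comp (tendsto_add_atTop_nat 1)
  have hA : Tendsto (fun n => (1 - (1 - β (n + 1)) ^ m) / β (n + 1)) atTop (𝓝 m) :=
    (tendsto_one_sub_one_sub_rpow_div m).comp <|
      tendsto_nhdsWithin_of_tendsto_nhds_of_eventually_within _ hβ1
        (.of_forall fun n => (hβ _).ne')
  have hB : Tendsto (fun n => (1 - β (n + 1)) ^ m) atTop (𝓝 1) := by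
    simpa using (hβ1.const_sub 1).rpow_const (p := m) (.inl (by norm_num))
  have hC : Tendsto (fun n => (1 - v (n + 1) / v n) / β (n + 1)) atTop (𝓝 (-(vstar * ξ))) := by
    have := (hv.tendsto_succ_div.neg.mul hv.tendsto_succ).mul (hξ.comp (tendsto_add_atTop_nat 1))
    rw [show -1 * vstar * ξ = -(vstar * ξ) by ring] at this
    refine this.congr fun n => ?_
    have := hv.1 n
    have := hv.1 (n + 1)
    have := hβ (n + 1)
    simp only [Function.comp_apply, Nat.cast_add, Nat.cast_one]
    field_simp
    ring
  have := hA.add (hB.mul hC)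
  rw [show m + 1 * -(vstar * ξ) = m - vstar * ξ by ring] at this
  refine this.congr fun n => ?_
  have := hβ (n + 1)
  field_simp
  ring

theorem lemma1_part1_general (v β : ℕ → ℝ) (vstar b ξ m : ℝ)
    (hv : GS vstar v) (hβ : GS (-b) β) (hb : b ∈ Set.Ioc (1/2 : ℝ) 1)
    (hβ01 : ∀ n, β n ∈ Set.Ioo (0 : ℝ) 1)
    (hξ : Tendsto (fun n : ℕ => ((n : ℝ) * β n)⁻¹) atTop (nhds ξ))
    (hmv : 0 < m - vstar * ξ)
    (Q : ℕ → ℝ) (hQ : ∀ n, Q n = ∏ j ∈ Icc 1 n, (1 - β j)) :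
    Tendsto (fun n : ℕ =>
        v n * Q n ^ m * ∑ k ∈ Icc 1 n, Q k ^ (-m) * (β k / v k))
      atTop (nhds (1 / (m - vstar * ξ))) := by
  have hβpos : ∀ n, 0 < β n := fun n => (hβ01 n).1
  have hQpos : ∀ n, 0 < Q n := fun n => hQ n ▸ prod_pos fun j _ => sub_pos.2 (hβ01 j).2
  have hQsucc : ∀ n, Q (n + 1) ^ (-m) * (1 - β (n + 1)) ^ m = Q n ^ (-m) := fun n => by
    rw [hQ, prod_Icc_succ_top (Nat.le_add_left 1 n), ← hQ, mul_rpow (hQpos n).le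
      (sub_pos.2 (hβ01 _).2).le, mul_assoc, ← rpow_add (sub_pos.2 (hβ01 _).2), neg_add_cancel,
      rpow_zero, mul_one]
  have hlim := tendsto_div_of_multiplicative_increments
    (S := fun n => ∑ k ∈ Icc 1 n, Q k ^ (-m) * (β k / v k)) (T := fun n => Q n ^ (-m) / v n)
    (b := fun n => β (n + 1)) hmv (by positivity)
    (fun n => div_pos (rpow_pos_of_pos (hQpos n) _) (hv.1 n)) (fun n => hβpos _)
    (fun n => by rw [sum_Icc_succ_top (Nat.le_add_left 1 n)]; ring)
    (fun n => by
      have := hv.1 n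
      have := hv.1 (n + 1)
      field_simp
      linear_combination v (n + 1) * hQsucc n)
    (hv.tendsto_one_sub_ratio_mul_rpow_div m hβpos
      (hβ.tendsto_zero_of_neg (by linarith [hb.1])) hξ)
    (eventually_div_le_of_tendsto_inv_mul hβpos hξ)
  rw [one_div]
  refine hlim.congr fun n => ?_
  have := hv.1 n
  rw [rpow_neg (hQpos n).le]
  field_simp

theorem lemma1_part1 (v β : ℕ → ℝ) (vstar b ξ m : ℝ)
    (hv : GS vstar v) (hβ : GS (-b) β) (hb : b ∈ Set.Ioc (1/2 : ℝ) 1)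
    (hβ01 : ∀ n, β n ∈ Set.Ioo (0 : ℝ) 1)
    (hξ : Tendsto (fun n : ℕ => ((n : ℝ) * β n)⁻¹) atTop (nhds ξ))
    (hξ0 : 0 ≤ ξ) (hm : 0 < m) (hmv : 0 < m - vstar * ξ)
    (Q : ℕ → ℝ) (hQ : ∀ n, Q n = ∏ j ∈ Icc 1 n, (1 - β j)) :
    Tendsto (fun n : ℕ =>
        v n * Q n ^ m * ∑ k ∈ Icc 1 n, Q k ^ (-m) * (β k / v k))
      atTop (nhds (1 / (m - vstar * ξ))) :=
  lemma1_part1_general v β vstar b ξ m hv hβ hb hβ01 hξ hmv Q hQ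
end

section
/- Let $(\beta_n)=(n^{-1})$ so that $Q_n=\prod_{j=2}^n(1-1/j)=1/n$ (with the convention that the product starts at $j=2$). Let $(h_n)\in\mathcal{GS}(-a)$ with $a\in(0,1)$. Then $\lim_{n\to\infty}\frac{h_n}{n}\sum_{k=1}^n\frac{1}{h_k}=\frac{1}{1+a}$. -/
open Filter Finset

private lemma sum_Icc_one_eq_sum_range (f : ℕ → ℝ) (n : ℕ) :
    ∑ k ∈ Icc 1 n, f k = ∑ k ∈ range n, f (k + 1) := by
  induction n with
  | zero => simp
  | succ n ih =>
    rw [Finset.sum_range_succ, ← ih,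
      ← Finset.sum_Icc_succ_top (Nat.one_le_iff_ne_zero.mpr (Nat.succ_ne_zero n))]

theorem bandwidth_average_limit (h : ℕ → ℝ) (a : ℝ)
    (ha : a ∈ Set.Ioo (0:ℝ) 1) (hh : GS (-a) h) :
    Tendsto (fun n : ℕ => h n / n * ∑ k ∈ Icc 1 n, (h k)⁻¹)
      atTop (nhds (1 / (1 + a))) := by
  obtain ⟨hpos, hlim⟩ := hh
  obtain ⟨ha0, _⟩ := ha
  have ha' : (0:ℝ) < 1 + a := by linarith
  have hne : ∀ n, h n ≠ 0 := fun n => (hpos n).ne'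
  set L : ℝ := 1 / (1 + a) with hL
  -- the shifted sequence c
  set c : ℕ → ℝ := fun k => ((k:ℝ) + 1) * (1 - h k / h (k + 1)) with hc
  have hcl : Tendsto c atTop (nhds (-a)) := by
    have := hlim.comp (tendsto_add_atTop_nat 1)
    simp only [Function.comp_def] at this
    refine this.congr fun k => ?_
    simp [hc, Nat.add_sub_cancel]
  -- ratio r
  set r : ℕ → ℝ := fun k => h k / h (k + 1) with hr
  have hr0 : ∀ k, 0 < r k := fun k => div_pos (hpos k) (hpos (k + 1))
  have hrl : Tendsto r atTop (nhds 1) := by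
    have h1 : Tendsto (fun k : ℕ => c k * (1 / ((k:ℝ) + 1))) atTop (nhds 0) := by
      simpa using hcl.mul tendsto_one_div_add_atTop_nhds_zero_nat
    have h2 : Tendsto (fun k : ℕ => 1 - c k * (1 / ((k:ℝ) + 1))) atTop (nhds 1) := by
      simpa using (tendsto_const_nhds (x := (1:ℝ))).sub h1
    refine h2.congr fun k => ?_
    have hk1 : ((k:ℝ) + 1) ≠ 0 := by positivity
    simp only [hc, hr]
    field_simp
    ring
  -- φ
  set φ : ℕ → ℝ := fun k => (1 - c k) / r k with hφ
  have hφl : Tendsto φ atTop (nhds (1 + a)) := by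
    have : Tendsto (fun k => (1 - c k) / r k) atTop (nhds ((1 - (-a)) / 1)) :=
      (tendsto_const_nhds.sub hcl).div hrl one_ne_zero
    simpa using this
  set d : ℕ → ℝ := fun k => (h (k + 1))⁻¹ with hd
  have hd0 : ∀ k, 0 < d k := fun k => inv_pos.mpr (hpos (k + 1))
  set e : ℕ → ℝ := fun k => d k * φ k with he
  have he' : ∀ k, e k = ((k:ℝ) + 1) / h (k + 1) - (k:ℝ) / h k := by
    intro k
    have hx : h k ≠ 0 := hne k
    have hy : h (k + 1) ≠ 0 := hne (k + 1)
    simp only [he, hd, hφ, hr, hc]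
    set x := h k
    set y := h (k + 1)
    field_simp
    ring
  set T : ℕ → ℝ := fun n => ∑ k ∈ range n, e k with hT
  have hTeq : ∀ n, T n = (n:ℝ) / h n := by
    intro n
    induction n with
    | zero => simp [hT]
    | succ n ih =>
      simp only [hT] at ih ⊢
      rw [Finset.sum_range_succ, ih, he' n]
      push_cast
      ring
  -- eventual positivity of φ
  have hφpos : ∀ᶠ k in atTop, 0 < φ k := hφl.eventually (eventually_gt_nhds ha')
  -- eventually decreasing h
  have hcneg : ∀ᶠ k in atTop, c k < 0 :=
    hcl.eventually (eventually_lt_nhds (by linarith : -a < 0))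
  obtain ⟨N, hN⟩ := hcneg.exists_forall_of_atTop
  have hdec : ∀ n, N ≤ n → h n ≤ h N := by
    intro n hn
    induction n, hn using Nat.le_induction with
    | base => exact le_refl _
    | succ n hn ih =>
      refine le_trans ?_ ih
      have hcn := hN n hn
      have h1 : (0:ℝ) < (n:ℝ) + 1 := by positivity
      have h2 : 1 < r n := by
        by_contra hcon
        push_neg at hcon
        have : (0:ℝ) ≤ c n := by
          have : (0:ℝ) ≤ ((n:ℝ) + 1) * (1 - r n) :=
            mul_nonneg h1.le (by linarith)
          simpa [hc, hr] using this
        linarith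
      exact le_of_lt ((one_lt_div (hpos (n + 1))).mp h2)
  -- T tends to infinity
  have hTtop : Tendsto T atTop atTop := by
    have hbase : Tendsto (fun n : ℕ => (n:ℝ) / h N) atTop atTop :=
      tendsto_natCast_atTop_atTop.atTop_div_const (hpos N)
    refine tendsto_atTop_mono' atTop ?_ hbase
    filter_upwards [eventually_ge_atTop N] with n hn
    rw [hTeq n]
    exact div_le_div_of_nonneg_left (Nat.cast_nonneg n) (hpos n) (hdec n hn)
  set U : ℕ → ℝ := fun n => ∑ k ∈ range n, |e k| with hU
  have hTU : ∀ n, T n ≤ U n := fun n => Finset.sum_le_sum fun k _ => le_abs_self _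
  have hUtop : Tendsto U atTop atTop := tendsto_atTop_mono hTU hTtop
  have hepos : ∀ᶠ k in atTop, 0 < e k := by
    filter_upwards [hφpos] with k hk
    exact mul_pos (hd0 k) hk
  obtain ⟨M, hM⟩ := hepos.exists_forall_of_atTop
  set C : ℝ := ∑ k ∈ range M, (|e k| - e k) with hC
  have hUC : ∀ n, M ≤ n → U n = T n + C := by
    intro n hn
    induction n, hn using Nat.le_induction with
    | base =>
      simp only [hU, hT, hC]
      rw [Finset.sum_sub_distrib]
      ring
    | succ n hn ih =>
      simp only [hU, hT] at ih ⊢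
      rw [Finset.sum_range_succ, Finset.sum_range_succ, ih, abs_of_pos (hM n hn)]
      ring
  -- little o of the increments
  have hlo : (fun k => d k - L * e k) =o[atTop] fun k => |e k| := by
    rw [Asymptotics.isLittleO_abs_right]
    have hene : ∀ᶠ k in atTop, e k ≠ 0 := hepos.mono fun k hk => hk.ne'
    rw [Asymptotics.isLittleO_iff_tendsto' (hene.mono fun k hk h0 => absurd h0 hk)]
    have key : Tendsto (fun k => (φ k)⁻¹ - L) atTop (nhds 0) := by
      have : Tendsto (fun k => (φ k)⁻¹ - L) atTop (nhds ((1 + a)⁻¹ - L)) :=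
        (hφl.inv₀ ha'.ne').sub tendsto_const_nhds
      simpa [hL, one_div] using this
    refine key.congr' ?_
    filter_upwards [hφpos] with k hk
    have hdk : d k ≠ 0 := (hd0 k).ne'
    have hφk : φ k ≠ 0 := hk.ne'
    simp only [he]
    field_simp
  have hsum : (fun n => ∑ k ∈ range n, (d k - L * e k)) =o[atTop] U :=
    hlo.sum_range (fun k => abs_nonneg _) hUtop
  set S : ℕ → ℝ := fun n => ∑ k ∈ range n, d k with hS
  have hsum' : (fun n => S n - L * T n) =o[atTop] U := by
    refine hsum.congr_left fun n => ?_
    simp [hS, hT, Finset.sum_sub_distrib, Finset.mul_sum]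
  have hq : Tendsto (fun n => (S n - L * T n) / U n) atTop (nhds 0) :=
    hsum'.tendsto_div_nhds_zero
  have hTne : ∀ᶠ n in atTop, T n ≠ 0 :=
    (hTtop.eventually_ge_atTop 1).mono fun n hn => by linarith
  have hUne : ∀ᶠ n in atTop, U n ≠ 0 :=
    (hUtop.eventually_ge_atTop 1).mono fun n hn => by linarith
  have hCT : Tendsto (fun n => 1 + C / T n) atTop (nhds 1) := by
    simpa using (tendsto_const_nhds (x := (1:ℝ))).add
      ((tendsto_const_nhds (x := C)).div_atTop hTtop)
  have hUT : Tendsto (fun n => U n / T n) atTop (nhds 1) := by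
    refine hCT.congr' ?_
    filter_upwards [eventually_ge_atTop M, hTne] with n hn hTn
    rw [hUC n hn]
    field_simp
  have hST : Tendsto (fun n => S n / T n) atTop (nhds L) := by
    have hmul : Tendsto (fun n => (S n - L * T n) / U n * (U n / T n) + L)
        atTop (nhds L) := by
      have := (hq.mul hUT).add (tendsto_const_nhds (x := L))
      simpa using this
    refine hmul.congr' ?_
    filter_upwards [hTne, hUne] with n h1 h2
    field_simp
    ring
  refine hST.congr' ?_
  filter_upwards [eventually_ge_atTop 1, hTne] with n hn hTn
  have hn0 : ((n:ℝ)) ≠ 0 := Nat.cast_ne_zero.mpr (by omega)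
  rw [hTeq n, sum_Icc_one_eq_sum_range]
  simp only [hS, hd]
  have hhn : h n ≠ 0 := hne n
  field_simp
end
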